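/- arXiv:math/0511159 — 4 statements merged into one kernel-verified Lean document; each statement's English description precedes it below -/
import Mathlib

section
/- Let A be a ring and I a two-sided idempotent ideal of A such that {a ∈ A : aI = 0} = 0 and such that ann_M(I) is a direct summand of M for every right A-module M. Then every right ideal of the quotient ring A/I is projective as a right A/I-module, i.e., A/I is right hereditary. -/
/-! Let `J ⊆ A` be the preimage of a right ideal `𝔟` of `A/I`, let `q : F → J` be a free
presentation and put `M = F / (ker q) I`. Since `I` has zero left annihilator, `ann_M(I)` is
exactly the kernel of the induced map `M → J`, so the splitting hypothesis makes `J` a direct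
summand of `M`. Reducing modulo `I`, `M / M I = F / F I` is free over `A/I`, while
`J / J I = J / I = 𝔟` because `I = I² ⊆ J I ⊆ I`; hence `𝔟` is a direct summand of a free
`A/I`-module.

Right `A`-modules are left `Aᵐᵒᵖ`-modules, and the argument is carried out for left modules over
a ring `R` with a surjection `f : R → S` whose kernel plays the role of `I`. -/

open MulOpposite

variable (A : Type) [Ring A]

/-- `ann_M(I) = {m ∈ M | m·a = 0 for all a ∈ I}` as a submodule of the right `A`-module `M`. -/
def rAnn (I : Ideal A) (M : Type) [AddCommGroup M] [Module Aᵐᵒᵖ M] :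
    Submodule Aᵐᵒᵖ M where
  carrier := {m : M | ∀ a ∈ I, op a • m = 0}
  add_mem' := by
    intro x y hx hy a ha
    rw [smul_add, hx a ha, hy a ha, add_zero]
  zero_mem' := by
    intro a _
    rw [smul_zero]
  smul_mem' := by
    intro c m hm a ha
    rw [smul_smul]
    have h1 : op a * c = op (c.unop * a) := by
      rw [op_mul, op_unop]
    rw [h1]
    exact hm (c.unop * a) (I.mul_mem_left c.unop ha)

/-- The ring congruence attached to a two-sided ideal `I` of `A`; its quotient is the
quotient ring `A/I`. -/
def idealCon (I : Ideal A) (hright : ∀ a ∈ I, ∀ b : A, a * b ∈ I) : RingCon A where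
  r a b := a - b ∈ I
  iseqv := by
    refine ⟨fun a => by simpa using I.zero_mem, fun {a b} h => ?_, fun {a b c} h h' => ?_⟩
    · have := I.neg_mem h
      rwa [neg_sub] at this
    · have := I.add_mem h h'
      rwa [sub_add_sub_cancel] at this
  mul' := by
    intro w x y z h h'
    show w * y - x * z ∈ I
    have h1 : (w - x) * y ∈ I := hright _ h y
    have h2 : x * (y - z) ∈ I := by simpa [smul_eq_mul] using I.smul_mem x h'
    have h3 := I.add_mem h1 h2
    have heq : (w - x) * y + x * (y - z) = w * y - x * z := by noncomm_ring
    rwa [heq] at h3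
  add' := by
    intro w x y z h h'
    show w + y - (x + z) ∈ I
    have h3 := I.add_mem h h'
    have heq : w - x + (y - z) = w + y - (x + z) := by abel
    rwa [heq] at h3

universe u

open Function

section

variable {R : Type*} [Ring R]

def Submodule.torsionByIdeal (𝔞 : Ideal R) [𝔞.IsTwoSided] (M : Type*) [AddCommGroup M]
    [Module R M] : Submodule R M where
  carrier := {m | ∀ x ∈ 𝔞, x • m = 0}
  add_mem' hm hn x hx := by rw [smul_add, hm x hx, hn x hx, add_zero]
  zero_mem' x _ := smul_zero x
  smul_mem' r m hm x hx := by rw [smul_smul]; exact hm _ (𝔞.mul_mem_right r hx)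

theorem Submodule.mem_torsionByIdeal {𝔞 : Ideal R} [𝔞.IsTwoSided] {M : Type*} [AddCommGroup M]
    [Module R M] {m : M} : m ∈ torsionByIdeal 𝔞 M ↔ ∀ x ∈ 𝔞, x • m = 0 := Iff.rfl

theorem Submodule.ker_liftQ_smul_ker {𝔞 : Ideal R} [𝔞.IsTwoSided]
    (hann : ∀ r : R, (∀ x ∈ 𝔞, x * r = 0) → r = 0) {F : Type*} [AddCommGroup F] [Module R F]
    {J : Submodule R R} (q : F →ₗ[R] J) :
    LinearMap.ker ((𝔞 • LinearMap.ker q).liftQ q smul_le_right) =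
      torsionByIdeal 𝔞 (F ⧸ 𝔞 • LinearMap.ker q) := by
  ext m
  obtain ⟨y, rfl⟩ := Quotient.mk_surjective _ m
  simp only [LinearMap.mem_ker, liftQ_apply, mem_torsionByIdeal, ← Quotient.mk_smul,
    Quotient.mk_eq_zero]
  refine ⟨fun hy x hx => smul_mem_smul hx hy, fun h => Subtype.ext (hann _ fun x hx => ?_)⟩
  simpa using congrArg Subtype.val (smul_le_right (h x hx) : q (x • y) = 0)

theorem LinearMap.exists_rightInverse_of_isCompl_ker {M N : Type*} [AddCommGroup M] [Module R M]
    [AddCommGroup N] [Module R N] {p : M →ₗ[R] N} (hp : Surjective p) {N' : Submodule R M}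
    (h : IsCompl (LinearMap.ker p) N') : ∃ s : N →ₗ[R] M, p ∘ₗ s = LinearMap.id := by
  set e := p.quotKerEquivOfSurjective hp
  refine ⟨N'.subtype ∘ₗ (Submodule.quotientEquivOfIsCompl _ _ h).toLinearMap ∘ₗ
    e.symm.toLinearMap, LinearMap.ext fun n => ?_⟩
  conv_rhs => rw [← e.apply_symm_apply n]
  rw [← Submodule.mk_quotientEquivOfIsCompl_apply h (e.symm n)]
  rfl

end

section

variable {R S : Type*} [Ring R] [Ring S] {f : R →+* S}
  {N B P : Type*} [AddCommGroup N] [Module R N] [AddCommGroup B] [Module S B]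
  [AddCommGroup P] [Module S P]

theorem LinearMap.exists_comp_eq_of_surjective (hf : Surjective f) {π : N →ₛₗ[f] B}
    (hπ : Surjective π) (g : N →ₛₗ[f] P) (h : LinearMap.ker π ≤ LinearMap.ker g) :
    ∃ g' : B →ₗ[S] P, ∀ n, g' (π n) = g n := by
  have hg : ∀ n n', π n = π n' → g n = g n' := fun n n' hnn' => by
    rw [← sub_eq_zero, ← map_sub]
    exact h (by rw [LinearMap.mem_ker, map_sub, hnn', sub_self])
  have hinv : ∀ b, π (surjInv hπ b) = b := surjInv_eq hπ
  refine ⟨{ toFun := g ∘ surjInv hπ, map_add' := fun b b' => ?_, map_smul' := fun s b => ?_ },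
    fun n => hg _ _ (hinv _)⟩
  · simp only [Function.comp_apply, ← map_add]
    exact hg _ _ (by rw [map_add, hinv, hinv, hinv])
  · obtain ⟨r, rfl⟩ := hf s
    simp only [Function.comp_apply, RingHom.id_apply, ← g.map_smulₛₗ]
    exact hg _ _ (by rw [π.map_smulₛₗ, hinv, hinv])

theorem Finsupp.linearCombination_comp_mapRange {ι : Type*} (v : ι → N) (π : N →ₛₗ[f] B) :
    Finsupp.linearCombination S (π ∘ v) ∘ₛₗ Finsupp.mapRange.linearMap f.toSemilinearMap =
      π ∘ₛₗ Finsupp.linearCombination R v :=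
  Finsupp.lhom_ext fun i r => by simp

theorem LinearMap.map_eq_zero_of_isIdempotentElem_ker (hidem : IsIdempotentElem (RingHom.ker f))
    {J : Submodule R R} (hJ : RingHom.ker f ≤ J) (g : J →ₛₗ[f] P) {j : J}
    (hj : (j : R) ∈ RingHom.ker f) : g j = 0 := by
  have key : RingHom.ker f ≤ (LinearMap.ker g).map J.subtype := by
    rw [← hidem.eq]
    refine Submodule.smul_le.2 fun a ha b hb => ⟨a • ⟨b, hJ hb⟩, ?_, rfl⟩
    rw [SetLike.mem_coe, LinearMap.mem_ker, g.map_smulₛₗ, ha, zero_smul]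
  obtain ⟨j', hj', hjj'⟩ := key hj
  rwa [← Subtype.ext hjj']

end

section

open Submodule

variable {R : Type u} {S : Type*} [Ring R] [Ring S] {f : R →+* S}

theorem RingHom.projective_submodule_of_isIdempotentElem_ker (hf : Surjective f)
    (hidem : IsIdempotentElem (RingHom.ker f))
    (hann : ∀ r : R, (∀ x ∈ RingHom.ker f, x * r = 0) → r = 0)
    (hsplit : ∀ (M : Type u) [AddCommGroup M] [Module R M],
      ∃ N' : Submodule R M, IsCompl (torsionByIdeal (RingHom.ker f) M) N')
    (𝔟 : Submodule S S) : Module.Projective S 𝔟 := by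
  set J := 𝔟.comap f.toSemilinearMap
  have hJ : RingHom.ker f ≤ J := fun x hx => by simp [J, (RingHom.mem_ker).1 hx]
  let π : J →ₛₗ[f] 𝔟 := f.toSemilinearMap.restrict fun _ h => h
  have hπ : Surjective π := fun b =>
    let ⟨r, hr⟩ := hf b
    ⟨⟨r, by simp [J, hr]⟩, Subtype.ext hr⟩
  let q := Finsupp.linearCombination R (_root_.id : J → J)
  let L := RingHom.ker f • LinearMap.ker q
  obtain ⟨N', hN'⟩ := hsplit (_ ⧸ L)
  obtain ⟨σ, hσ⟩ := LinearMap.exists_rightInverse_of_isCompl_ker (p := L.liftQ q smul_le_right)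
    (Surjective.of_comp (g := Submodule.Quotient.mk) (Finsupp.linearCombination_id_surjective R J))
    (ker_liftQ_smul_ker hann q ▸ hN')
  let ρF := Finsupp.mapRange.linearMap (α := J) f.toSemilinearMap
  let ρ : (_ ⧸ L) →ₛₗ[f] (J →₀ S) :=
    L.liftQ ρF (smul_le.2 fun a ha y _ => by simp [ρF, (RingHom.mem_ker).1 ha])
  obtain ⟨ι, hι⟩ := LinearMap.exists_comp_eq_of_surjective hf hπ (ρ ∘ₛₗ σ) fun j hj =>
    LinearMap.map_eq_zero_of_isIdempotentElem_ker hidem hJ _ (Subtype.ext_iff.1 hj)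
  let T := Finsupp.linearCombination S π
  refine Module.Projective.of_split ι T (LinearMap.ext fun b => ?_)
  obtain ⟨j, rfl⟩ := hπ b
  obtain ⟨x, hx⟩ := Submodule.Quotient.mk_surjective _ (σ j)
  calc T (ι (π j))
      = T (ρF x) := by rw [hι, LinearMap.comp_apply, ← hx]; rfl
    _ = π (q x) := congrArg (· x) (Finsupp.linearCombination_comp_mapRange _root_.id π)
    _ = π (L.liftQ q smul_le_right (σ j)) := by rw [← hx]; rfl
    _ = π j := congrArg π (LinearMap.congr_fun hσ j)

end

theorem Module.Projective.submodule_of_forall_submodule_self {S : Type*} [Ring S]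
    (h : ∀ 𝔟 : Submodule Sᵐᵒᵖ Sᵐᵒᵖ, Module.Projective Sᵐᵒᵖ 𝔟) (𝔟 : Submodule Sᵐᵒᵖ S) :
    Module.Projective Sᵐᵒᵖ 𝔟 :=
  Module.Projective.of_equiv ((opLinearEquiv Sᵐᵒᵖ).submoduleMap 𝔟).symm

section

variable (I : Ideal A) (hright : ∀ a ∈ I, ∀ b : A, a * b ∈ I)

def idealCon.opMk : Aᵐᵒᵖ →+* (idealCon A I hright).Quotientᵐᵒᵖ :=
  RingHom.op (idealCon A I hright).mk'

theorem idealCon.opMk_surjective : Surjective (idealCon.opMk A I hright) := fun y =>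
  let ⟨a, ha⟩ := (idealCon A I hright).mk'_surjective y.unop
  ⟨op a, congrArg op ha⟩

theorem idealCon.mem_ker_opMk {x : Aᵐᵒᵖ} :
    x ∈ RingHom.ker (idealCon.opMk A I hright) ↔ x.unop ∈ I := by
  rw [RingHom.mem_ker, ← unop_eq_zero_iff]
  exact (RingCon.eq _).trans (by simp [idealCon])

theorem idealCon.isIdempotentElem_ker_opMk
    (hidem : ∀ a ∈ I, a ∈ AddSubgroup.closure {x : A | ∃ b ∈ I, ∃ c ∈ I, x = b * c}) :
    IsIdempotentElem (RingHom.ker (idealCon.opMk A I hright)) := by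
  refine le_antisymm Submodule.smul_le_right fun x hx => ?_
  have key : AddSubgroup.closure {x : A | ∃ b ∈ I, ∃ c ∈ I, x = b * c} ≤
      (RingHom.ker (opMk A I hright) * RingHom.ker (opMk A I hright)).toAddSubgroup.comap
        (opAddEquiv : A ≃+ Aᵐᵒᵖ).toAddMonoidHom := by
    refine (AddSubgroup.closure_le _).2 ?_
    rintro _ ⟨b, hb, c, hc, rfl⟩
    exact Submodule.smul_mem_smul ((mem_ker_opMk A I hright).2 hc)
      ((mem_ker_opMk A I hright).2 hb)
  exact key (hidem _ ((mem_ker_opMk A I hright).1 hx))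

theorem rAnn_eq_torsionByIdeal (M : Type) [AddCommGroup M] [Module Aᵐᵒᵖ M] :
    rAnn A I M = Submodule.torsionByIdeal (RingHom.ker (idealCon.opMk A I hright)) M := by
  ext m
  simp only [Submodule.mem_torsionByIdeal, idealCon.mem_ker_opMk]
  exact ⟨fun h x hx => h x.unop hx, fun h a ha => h (op a) ha⟩

end

/-- let `I` be a two-sided idempotent ideal of `A` with zero left
annihilator such that `ann_M(I)` is a direct summand of every right `A`-module `M`.
Then every right ideal of the quotient ring `A/I` is projective as a right `A/I`-module,
i.e. `A/I` is right hereditary. -/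
theorem stmt_15 (I : Ideal A)
    (hright : ∀ a ∈ I, ∀ b : A, a * b ∈ I)
    (hidem : ∀ a ∈ I, a ∈ AddSubgroup.closure {x : A | ∃ b ∈ I, ∃ c ∈ I, x = b * c})
    (hlann : ∀ a : A, (∀ x ∈ I, a * x = 0) → a = 0)
    (hsplit : ∀ (M : Type) [AddCommGroup M] [Module Aᵐᵒᵖ M],
      ∃ N' : Submodule Aᵐᵒᵖ M, rAnn A I M ⊓ N' = ⊥ ∧ rAnn A I M ⊔ N' = ⊤) :
    ∀ 𝔟 : Submodule (idealCon A I hright).Quotientᵐᵒᵖ (idealCon A I hright).Quotient,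
      Module.Projective (idealCon A I hright).Quotientᵐᵒᵖ 𝔟 := by
  refine Module.Projective.submodule_of_forall_submodule_self <|
    RingHom.projective_submodule_of_isIdempotentElem_ker (idealCon.opMk_surjective A I hright)
      (idealCon.isIdempotentElem_ker_opMk A I hright hidem) (fun r hr => ?_) fun M _ _ => ?_
  · refine unop_injective (hlann r.unop fun x hx => congrArg unop ?_)
    exact hr (op x) ((idealCon.mem_ker_opMk A I hright).2 hx)
  · obtain ⟨N', hinf, hsup⟩ := hsplit M
    rw [rAnn_eq_torsionByIdeal A I hright] at hinf hsup
    exact ⟨N', disjoint_iff.2 hinf, codisjoint_iff.2 hsup⟩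
end

section
/- Let A be a ring and I a two-sided idempotent ideal of A such that {a ∈ A : aI = 0} = 0, A/I is flat as a left A-module, and A/I is a semisimple ring. Then ann_M(I) is a direct summand of M for every right A-module M. -/
/-!
Write `MI` (`rSmulIdeal A I M`) for the submodule of `M` spanned by the `m • a` with `a ∈ I`. Purity of `I ⊆ A`,
tested on `A/aA`, says `aA ∩ I = aI`; so every `a ∈ I` has a right unit `e ∈ I` with `a e = a`,
and combining such units every element of `MI` has one too. An element of `ann_M(I)` is killed by
its right unit, hence `ann_M(I) ∩ MI = 0`. On the other hand `M/MI` is a module over the semisimple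
ring `A/I`, so the image of `ann_M(I)` in it has a complement, and the preimage of that complement
is a complement of `ann_M(I)` in `M`.
-/

open MulOpposite TensorProduct

variable (A : Type) [Ring A]

section PureTensor

/-- The subgroup of relations of `M ⊗[ℤ] N` whose quotient is the balanced tensor product
`M ⊗[A] N` of a right `A`-module `M` and a left `A`-module `N`. -/
noncomputable def balancedRel (M N : Type) [AddCommGroup M] [Module Aᵐᵒᵖ M]
    [AddCommGroup N] [Module A N] : AddSubgroup (M ⊗[ℤ] N) :=
  AddSubgroup.closure
    {x : M ⊗[ℤ] N | ∃ (m : M) (a : A) (n : N), x = (op a • m) ⊗ₜ[ℤ] n - m ⊗ₜ[ℤ] (a • n)}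

/-- The balanced tensor product `M ⊗[A] N` over the (possibly noncommutative) ring `A`. -/
noncomputable def RTensor (M N : Type) [AddCommGroup M] [Module Aᵐᵒᵖ M]
    [AddCommGroup N] [Module A N] : Type :=
  (M ⊗[ℤ] N) ⧸ balancedRel A M N

noncomputable instance (M N : Type) [AddCommGroup M] [Module Aᵐᵒᵖ M] [AddCommGroup N]
    [Module A N] : AddCommGroup (RTensor A M N) :=
  inferInstanceAs (AddCommGroup ((M ⊗[ℤ] N) ⧸ balancedRel A M N))

/-- The canonical morphism `M ⊗[A] I ⟶ M ⊗[A] A` induced by the inclusion `I → A`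
of a left ideal `I`, for a right `A`-module `M`. -/
noncomputable def pureMap (I : Ideal A) (M : Type) [AddCommGroup M] [Module Aᵐᵒᵖ M] :
    RTensor A M I →+ RTensor A M A :=
  QuotientAddGroup.map (balancedRel A M I) (balancedRel A M A)
    (LinearMap.lTensor M (I.subtype.toAddMonoidHom.toIntLinearMap)).toAddMonoidHom
    (by
      rw [balancedRel, AddSubgroup.closure_le]
      rintro x ⟨m, a, n, rfl⟩
      simp only [AddSubgroup.coe_comap, Set.mem_preimage, LinearMap.toAddMonoidHom_coe,
        map_sub, LinearMap.lTensor_tmul, AddMonoidHom.coe_toIntLinearMap,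
        LinearMap.toAddMonoidHom_coe, Submodule.coe_subtype, SetLike.mem_coe]
      exact AddSubgroup.subset_closure ⟨m, a, (n : A), by rw [Submodule.coe_smul]⟩)

end PureTensor

namespace RTensor

variable {A} {M N P : Type} [AddCommGroup M] [Module Aᵐᵒᵖ M] [AddCommGroup N] [Module A N]
  [AddCommGroup P]

variable (A) in
noncomputable def tmul (m : M) (n : N) : RTensor A M N :=
  QuotientAddGroup.mk (m ⊗ₜ[ℤ] n)

theorem op_smul_tmul (m : M) (a : A) (n : N) : tmul A (op a • m) n = tmul A m (a • n) :=
  QuotientAddGroup.eq_iff_sub_mem.mpr (AddSubgroup.subset_closure ⟨m, a, n, rfl⟩)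

theorem zero_tmul (n : N) : tmul A (0 : M) n = 0 := by
  rw [tmul, TensorProduct.zero_tmul]
  rfl

noncomputable def lift (f : M →+ N →+ P) (hf : ∀ m (a : A) n, f (op a • m) n = f m (a • n)) :
    RTensor A M N →+ P :=
  QuotientAddGroup.lift _ (liftAddHom f fun z m n => by rw [map_zsmul, map_zsmul]; rfl) <| by
    rw [balancedRel, AddSubgroup.closure_le]
    rintro _ ⟨m, a, n, rfl⟩
    simp [hf]

theorem lift_tmul (f : M →+ N →+ P) (hf : ∀ m (a : A) n, f (op a • m) n = f m (a • n))
    (m : M) (n : N) : lift f hf (tmul A m n) = f m n :=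
  rfl

end RTensor

theorem pureMap_tmul (I : Ideal A) {M : Type} [AddCommGroup M] [Module Aᵐᵒᵖ M] (m : M) (x : I) :
    pureMap A I M (RTensor.tmul A m x) = RTensor.tmul A m (x : A) :=
  rfl

/-- Purity applied to the right module `A/aA` gives `a ∈ aA ∩ I = aI`. -/
theorem exists_mul_eq_self_of_pure (I : Ideal A)
    (hpure : ∀ (M : Type) [AddCommGroup M] [Module Aᵐᵒᵖ M], Function.Injective (pureMap A I M))
    {a : A} (ha : a ∈ I) : ∃ e ∈ I, a * e = a := by
  let R : Submodule Aᵐᵒᵖ A := Submodule.span Aᵐᵒᵖ {a}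
  let J : AddSubgroup A := I.toAddSubgroup.map (AddMonoidHom.mulLeft a)
  let f : A ⧸ R →+ I →+ A ⧸ J :=
    QuotientAddGroup.lift R.toAddSubgroup
      ((AddMonoidHom.mul.compl₂ I.subtype.toAddMonoidHom).compr₂ (QuotientAddGroup.mk' J)) <| by
        intro b hb
        obtain ⟨c, rfl⟩ := Submodule.mem_span_singleton.mp hb
        ext x
        exact (QuotientAddGroup.eq_zero_iff _).mpr
          ⟨c.unop * x, I.mul_mem_left _ x.2, (mul_assoc a c.unop x).symm⟩
  have hf : ∀ (m : A ⧸ R) (c : A) (x : I), f (op c • m) x = f m (c • x) := by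
    rintro ⟨b⟩ c x
    exact congrArg (QuotientAddGroup.mk' J) (mul_assoc b c x)
  have h_tmul : RTensor.tmul A (Submodule.Quotient.mk 1 : A ⧸ R) (⟨a, ha⟩ : I) = 0 := by
    apply hpure (A ⧸ R)
    have h_kill : (op a • Submodule.Quotient.mk 1 : A ⧸ R) = 0 :=
      (Submodule.Quotient.mk_eq_zero R (x := op a • 1)).mpr <| by
        rw [op_smul_eq_mul, one_mul]
        exact Submodule.mem_span_singleton_self a
    calc pureMap A I (A ⧸ R) (RTensor.tmul A (Submodule.Quotient.mk 1) ⟨a, ha⟩)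
        = RTensor.tmul A (Submodule.Quotient.mk 1 : A ⧸ R) (a • (1 : A)) := by
          rw [pureMap_tmul, smul_eq_mul, mul_one]
      _ = 0 := by rw [← RTensor.op_smul_tmul, h_kill, RTensor.zero_tmul]
      _ = pureMap A I (A ⧸ R) 0 := (map_zero _).symm
  have h_mem : (QuotientAddGroup.mk (1 * a) : A ⧸ J) = 0 := by
    rw [← map_zero (RTensor.lift f hf), ← h_tmul, RTensor.lift_tmul]
    rfl
  rw [one_mul] at h_mem
  obtain ⟨e, he, hae⟩ := (QuotientAddGroup.eq_zero_iff a).mp h_mem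
  exact ⟨e, he, hae⟩

def rSmulIdeal (I : Ideal A) (M : Type) [AddCommGroup M] [Module Aᵐᵒᵖ M] : Submodule Aᵐᵒᵖ M :=
  Submodule.span Aᵐᵒᵖ {y : M | ∃ a ∈ I, ∃ m : M, y = op a • m}

section RightUnitsInModules

variable {A} {I : Ideal A} {M : Type} [AddCommGroup M] [Module Aᵐᵒᵖ M]

theorem op_smul_mem_rSmulIdeal {a : A} (ha : a ∈ I) (m : M) : op a • m ∈ rSmulIdeal A I M :=
  Submodule.subset_span ⟨a, ha, m, rfl⟩

theorem op_smul_eq_self_of_mul_eq {e₁ e : A} {x : M} (hx : op e₁ • x = x) (he : e₁ * e = e₁) :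
    op e • x = x := by
  rw [← hx, smul_smul, ← op_mul, he]

variable (hright : ∀ a ∈ I, ∀ b : A, a * b ∈ I)
  (hpure : ∀ (M : Type) [AddCommGroup M] [Module Aᵐᵒᵖ M], Function.Injective (pureMap A I M))
include hpure

theorem exists_mul_eq_self_and_mul_eq_self {a b : A} (ha : a ∈ I) (hb : b ∈ I) :
    ∃ e ∈ I, a * e = a ∧ b * e = b := by
  obtain ⟨e₁, he₁, hae₁⟩ := exists_mul_eq_self_of_pure A I hpure ha
  obtain ⟨e₂, he₂, hbe₂⟩ :=
    exists_mul_eq_self_of_pure A I hpure (I.sub_mem hb (I.mul_mem_left b he₁))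
  refine ⟨e₁ + e₂ - e₁ * e₂, I.sub_mem (I.add_mem he₁ he₂) (I.mul_mem_left e₁ he₂), ?_, ?_⟩
  · rw [mul_sub, mul_add, hae₁, ← mul_assoc, hae₁, add_sub_cancel_right]
  · rw [sub_mul] at hbe₂
    rw [mul_sub, mul_add, ← mul_assoc, add_sub_assoc, hbe₂, add_sub_cancel]

include hright in
theorem exists_op_smul_eq_self_of_mem_rSmulIdeal {x : M} (hx : x ∈ rSmulIdeal A I M) :
    ∃ e ∈ I, op e • x = x := by
  induction hx using Submodule.span_induction with
  | mem y hy =>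
    obtain ⟨b, hb, m, rfl⟩ := hy
    obtain ⟨e, he, hbe⟩ := exists_mul_eq_self_of_pure A I hpure hb
    exact ⟨e, he, by rw [smul_smul, ← op_mul, hbe]⟩
  | zero => exact ⟨0, I.zero_mem, smul_zero _⟩
  | add x y _ _ ihx ihy =>
    obtain ⟨e₁, he₁, hx⟩ := ihx
    obtain ⟨e₂, he₂, hy⟩ := ihy
    obtain ⟨e, he, h₁, h₂⟩ := exists_mul_eq_self_and_mul_eq_self hpure he₁ he₂
    exact ⟨e, he, by
      rw [smul_add, op_smul_eq_self_of_mul_eq hx h₁, op_smul_eq_self_of_mul_eq hy h₂]⟩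
  | smul c y _ ih =>
    obtain ⟨e₁, he₁, hy⟩ := ih
    have hcy : c • y = op (e₁ * c.unop) • y := by
      rw [op_mul, op_unop, ← smul_smul, hy]
    obtain ⟨e, he, h⟩ := exists_mul_eq_self_of_pure A I hpure (hright e₁ he₁ c.unop)
    exact ⟨e, he, by rw [hcy, smul_smul, ← op_mul, h]⟩

include hright in
theorem disjoint_rAnn_rSmulIdeal : Disjoint (rAnn A I M) (rSmulIdeal A I M) := by
  rw [Submodule.disjoint_def]
  intro m hann hmI
  obtain ⟨e, he, hem⟩ := exists_op_smul_eq_self_of_mem_rSmulIdeal hright hpure hmI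
  rw [← hem, hann e he]

end RightUnitsInModules

theorem isSemisimpleRing_mop_of_isSemisimpleModule {B : Type*} [Ring B]
    [IsSemisimpleModule Bᵐᵒᵖ B] : IsSemisimpleRing Bᵐᵒᵖ :=
  IsSemisimpleModule.congr (MulOpposite.opLinearEquiv Bᵐᵒᵖ).symm

/-- `Q` is an `S`-module with the same submodules. -/
theorem isSemisimpleModule_of_ker_smul_eq_zero {R S Q : Type*} [Ring R] [Ring S]
    [IsSemisimpleRing S] [AddCommGroup Q] [Module R Q] (σ : R →+* S)
    (hσ : Function.Surjective σ) (hQ : ∀ r, σ r = 0 → ∀ q : Q, r • q = 0) :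
    IsSemisimpleModule R Q := by
  let _ : SMul S Q := ⟨fun s q => Function.surjInv hσ s • q⟩
  have hsmul : ∀ (r : R) (q : Q), σ r • q = r • q := fun r q => by
    show Function.surjInv hσ (σ r) • q = r • q
    rw [← sub_eq_zero, ← sub_smul]
    exact hQ _ (by rw [map_sub, Function.surjInv_eq hσ, sub_self]) q
  let _ : Module S Q := hσ.moduleLeft σ hsmul
  have : RingHomSurjective σ := ⟨hσ⟩
  let e : Q →ₛₗ[σ] Q := { AddMonoidHom.id Q with map_smul' := fun r q => (hsmul r q).symm }
  exact (e.isSemisimpleModule_iff_of_bijective Function.bijective_id).mpr inferInstance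

theorem isSemisimpleModule_quotient_rSmulIdeal (I : Ideal A)
    (hright : ∀ a ∈ I, ∀ b : A, a * b ∈ I)
    (hss : IsSemisimpleModule (idealCon A I hright).Quotientᵐᵒᵖ (idealCon A I hright).Quotient)
    (M : Type) [AddCommGroup M] [Module Aᵐᵒᵖ M] :
    IsSemisimpleModule Aᵐᵒᵖ (M ⧸ rSmulIdeal A I M) := by
  have := isSemisimpleRing_mop_of_isSemisimpleModule (B := (idealCon A I hright).Quotient)
  refine isSemisimpleModule_of_ker_smul_eq_zero (idealCon A I hright).mk'.op
    (fun s => ⟨op (Function.surjInv (idealCon A I hright).mk'_surjective s.unop),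
      congrArg op (Function.surjInv_eq _ _)⟩) ?_
  intro r hr q
  obtain ⟨m, rfl⟩ := Submodule.Quotient.mk_surjective _ q
  have hrI : r.unop ∈ I := by
    have : (idealCon A I hright).mk' r.unop = (idealCon A I hright).mk' 0 := by
      rw [map_zero]; exact congrArg unop hr
    have h0 : r.unop - 0 ∈ I := (idealCon A I hright).eq.mp this
    rwa [sub_zero] at h0
  rw [← Submodule.Quotient.mk_smul, Submodule.Quotient.mk_eq_zero]
  exact op_smul_mem_rSmulIdeal hrI m

theorem Disjoint.exists_isCompl_of_isSemisimpleModule_quotient {R M : Type*} [Ring R]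
    [AddCommGroup M] [Module R M] {N K : Submodule R M} (h : Disjoint N K)
    [IsSemisimpleModule R (M ⧸ K)] : ∃ N' : Submodule R M, IsCompl N N' := by
  obtain ⟨C, hC⟩ := ComplementedLattice.exists_isCompl (N.map K.mkQ)
  refine ⟨C.comap K.mkQ, ?_, ?_⟩
  · rw [Submodule.disjoint_def]
    intro m hmN hmC
    have : K.mkQ m ∈ N.map K.mkQ ⊓ C := ⟨Submodule.mem_map_of_mem hmN, hmC⟩
    rw [hC.inf_eq_bot, Submodule.mem_bot, Submodule.mkQ_apply,
      Submodule.Quotient.mk_eq_zero] at this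
    exact (Submodule.disjoint_def.mp h) m hmN this
  · rw [codisjoint_iff, eq_top_iff]
    intro m _
    obtain ⟨_, ⟨n, hn, rfl⟩, c, hc, hnc⟩ := Submodule.mem_sup.mp (hC.sup_eq_top ▸ trivial :
      K.mkQ m ∈ N.map K.mkQ ⊔ C)
    refine Submodule.mem_sup.mpr ⟨n, hn, m - n, ?_, add_sub_cancel n m⟩
    rwa [Submodule.mem_comap, map_sub, ← hnc, add_sub_cancel_left]

theorem stmt_16 (I : Ideal A)
    (hright : ∀ a ∈ I, ∀ b : A, a * b ∈ I)
    (hpure : ∀ (M : Type) [AddCommGroup M] [Module Aᵐᵒᵖ M],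
      Function.Injective (pureMap A I M))
    (hss : IsSemisimpleModule (idealCon A I hright).Quotientᵐᵒᵖ
      (idealCon A I hright).Quotient) :
    ∀ (M : Type) [AddCommGroup M] [Module Aᵐᵒᵖ M],
      ∃ N' : Submodule Aᵐᵒᵖ M, rAnn A I M ⊓ N' = ⊥ ∧ rAnn A I M ⊔ N' = ⊤ := by
  intro M _ _
  have := isSemisimpleModule_quotient_rSmulIdeal A I hright hss M
  obtain ⟨N', h⟩ :=
    (disjoint_rAnn_rSmulIdeal (M := M) hright hpure).exists_isCompl_of_isSemisimpleModule_quotient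
  exact ⟨N', h.inf_eq_bot, h.sup_eq_top⟩
end

section
/- Let A be a commutative ring and I an idempotent ideal of A such that IM is a direct summand of M for every A-module M. Then I = eA for some idempotent e ∈ A, and consequently ann_M(I) is also a direct summand of M for every A-module M (i.e., every left split TTF-triple over a commutative ring is centrally split). -/
/-- over a commutative ring `A`, if `I` is an idempotent ideal such that
`IM` is a direct summand of `M` for every `A`-module `M`, then `I = eA` for some
idempotent `e`, and consequently `ann_M(I)` is also a direct summand of every `A`-module
`M` (every left split TTF-triple over a commutative ring is centrally split). -/
theorem stmt_17 (A : Type) [CommRing A] (I : Ideal A) (hidem : I * I = I)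
    (hsplit : ∀ (M : Type) [AddCommGroup M] [Module A M],
      ∃ N' : Submodule A M,
        (I • (⊤ : Submodule A M)) ⊓ N' = ⊥ ∧ (I • (⊤ : Submodule A M)) ⊔ N' = ⊤) :
    ∃ e : A, IsIdempotentElem e ∧ I = Ideal.span {e} ∧
      ∀ (M : Type) [AddCommGroup M] [Module A M],
        ∃ N' : Submodule A M,
          Submodule.torsionBySet A M I ⊓ N' = ⊥ ∧ Submodule.torsionBySet A M I ⊔ N' = ⊤ := by
  obtain ⟨N', hinf, hsup⟩ := hsplit A
  have htop : I • (⊤ : Submodule A A) = I := by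
    rw [smul_eq_mul, Ideal.mul_top]
  rw [htop] at hinf hsup
  have h1 : (1 : A) ∈ I ⊔ N' := hsup ▸ Submodule.mem_top
  obtain ⟨e, he, f, hf, hef⟩ := Submodule.mem_sup.mp h1
  have hIN : ∀ x : A, x ∈ I → x ∈ N' → x = 0 := fun x hxI hxN =>
    (Submodule.mem_bot A).mp (hinf ▸ Submodule.mem_inf.mpr ⟨hxI, hxN⟩)
  have key : ∀ a ∈ I, a * e = a := by
    intro a ha
    have haf : a * f = 0 := hIN _ (I.mul_mem_right f ha) (by
      simpa [smul_eq_mul] using N'.smul_mem a hf)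
    have h : a * e + a * f = a := by rw [← mul_add, hef, mul_one]
    rw [haf, add_zero] at h
    exact h
  have hee : IsIdempotentElem e := key e he
  have hspan : I = Ideal.span {e} := by
    apply le_antisymm
    · intro a ha
      rw [Ideal.mem_span_singleton]
      exact ⟨a, by rw [mul_comm]; exact (key a ha).symm⟩
    · rw [Ideal.span_le]; simpa using he
  refine ⟨e, hee, hspan, ?_⟩
  intro M _ _
  have htor : Submodule.torsionBySet A M I = Submodule.torsionBy A M e := by
    ext m
    rw [Submodule.mem_torsionBySet_iff, Submodule.mem_torsionBy_iff]
    constructor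
    · intro h; exact h ⟨e, he⟩
    · rintro h ⟨a, ha⟩
      have := key a ha
      show a • m = 0
      rw [← this, mul_smul, h, smul_zero]
  refine ⟨LinearMap.range (LinearMap.lsmul A M e), ?_, ?_⟩
  · rw [eq_bot_iff]
    rintro m hm
    obtain ⟨hm1, x, rfl⟩ := Submodule.mem_inf.mp hm
    rw [htor, Submodule.mem_torsionBy_iff] at hm1
    simp only [LinearMap.lsmul_apply] at *
    have : e • e • x = e • x := by rw [← mul_smul, hee]
    rw [hm1] at this
    simp [← this]
  · rw [eq_top_iff]
    intro m _
    have : m = (m - e • m) + e • m := by abel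
    rw [this]
    refine Submodule.add_mem_sup ?_ ⟨m, rfl⟩
    rw [htor, Submodule.mem_torsionBy_iff]
    rw [smul_sub, ← mul_smul, hee, sub_self]
end

section
/- Let k be a field, let A be the subring of the product ring k^ℕ consisting of the eventually constant sequences, and let I = {λ ∈ A : λₙ = 0 for all sufficiently large n} be the set of eventually zero sequences. Then: (a) I is an ideal of A with I·I = I; (b) {a ∈ A : aI = 0} = 0; (c) ann_M(I) is a direct summand of M for every A-module M; and (d) there is no idempotent e ∈ A with I = eA (in particular, I is not finitely generated and the associated TTF-triple is right split but not centrally split). -/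
/-- The subring of `k^ℕ` of eventually constant sequences. -/
def EvConst (k : Type) [Field k] : Subring (ℕ → k) where
  carrier := {f : ℕ → k | ∃ N : ℕ, ∃ c : k, ∀ n ≥ N, f n = c}
  one_mem' := ⟨0, 1, fun _ _ => rfl⟩
  zero_mem' := ⟨0, 0, fun _ _ => rfl⟩
  mul_mem' := by
    rintro f g ⟨N₁, c₁, h₁⟩ ⟨N₂, c₂, h₂⟩
    exact ⟨max N₁ N₂, c₁ * c₂, fun n hn => by
      rw [Pi.mul_apply, h₁ n (le_trans (le_max_left _ _) hn),
        h₂ n (le_trans (le_max_right _ _) hn)]⟩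
  add_mem' := by
    rintro f g ⟨N₁, c₁, h₁⟩ ⟨N₂, c₂, h₂⟩
    exact ⟨max N₁ N₂, c₁ + c₂, fun n hn => by
      rw [Pi.add_apply, h₁ n (le_trans (le_max_left _ _) hn),
        h₂ n (le_trans (le_max_right _ _) hn)]⟩
  neg_mem' := by
    rintro f ⟨N, c, h⟩
    exact ⟨N, -c, fun n hn => by rw [Pi.neg_apply, h n hn]⟩

/-- The ideal of eventually zero sequences in the ring of eventually constant sequences. -/
def evZeroIdeal (k : Type) [Field k] : Ideal (EvConst k) where
  carrier := {f : EvConst k | ∃ N : ℕ, ∀ n ≥ N, (f : ℕ → k) n = 0}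
  zero_mem' := ⟨0, fun _ _ => rfl⟩
  add_mem' := by
    rintro f g ⟨N₁, h₁⟩ ⟨N₂, h₂⟩
    exact ⟨max N₁ N₂, fun n hn => by
      have hadd : ((f + g : EvConst k) : ℕ → k) n = (f : ℕ → k) n + (g : ℕ → k) n := rfl
      rw [hadd, h₁ n (le_trans (le_max_left _ _) hn),
        h₂ n (le_trans (le_max_right _ _) hn), add_zero]⟩
  smul_mem' := by
    rintro c f ⟨N, h⟩
    refine ⟨N, fun n hn => ?_⟩
    have hz : (c : ℕ → k) n * (f : ℕ → k) n = 0 := by rw [h n hn, mul_zero]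
    exact hz

namespace Stmt18Aux

variable (k : Type) [Field k]

/-- The indicator of `{0, ..., N-1}` as an eventually constant sequence. -/
def eIdem (N : ℕ) : EvConst k :=
  ⟨fun n => if n < N then 1 else 0, N, 0, fun n hn => if_neg (by omega)⟩

lemma eIdem_mem (N : ℕ) : eIdem k N ∈ evZeroIdeal k :=
  ⟨N, fun n hn => if_neg (by omega)⟩

lemma eIdem_mul {N : ℕ} {x : EvConst k} (hx : ∀ n ≥ N, (x : ℕ → k) n = 0) :
    eIdem k N * x = x := by
  apply Subtype.ext
  funext n
  show (if n < N then (1:k) else 0) * (x : ℕ → k) n = (x : ℕ → k) n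
  by_cases h : n < N
  · rw [if_pos h, one_mul]
  · rw [if_neg h, zero_mul, hx n (by omega)]

/-- The indicator of `{j}` as an eventually constant sequence. -/
def delta (j : ℕ) : EvConst k :=
  ⟨fun n => if n = j then 1 else 0, j + 1, 0, fun n hn => if_neg (by omega)⟩

lemma delta_mem (j : ℕ) : delta k j ∈ evZeroIdeal k :=
  ⟨j + 1, fun n hn => if_neg (by omega)⟩

/-- The constant sequence. -/
def constSeq (c : k) : EvConst k := ⟨fun _ => c, 0, c, fun _ _ => rfl⟩

lemma sub_const_mem {x : EvConst k} {N : ℕ} {c : k} (h : ∀ n ≥ N, (x : ℕ → k) n = c) :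
    x - constSeq k c ∈ evZeroIdeal k := by
  refine ⟨N, fun n hn => ?_⟩
  show (x : ℕ → k) n - c = 0
  rw [h n hn, sub_self]

lemma const_mul_const (c : k) (hc : c ≠ 0) : constSeq k c⁻¹ * constSeq k c = 1 := by
  apply Subtype.ext
  funext n
  show c⁻¹ * c = 1
  exact inv_mul_cancel₀ hc

set_option maxHeartbeats 1000000 in
set_option synthInstance.maxHeartbeats 400000 in
theorem main (k : Type) [Field k] :
    (evZeroIdeal k * evZeroIdeal k = evZeroIdeal k) ∧
    (∀ a : EvConst k, (∀ x ∈ evZeroIdeal k, a * x = 0) → a = 0) ∧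
    (∀ (M : Type) [AddCommGroup M] [Module (EvConst k) M],
      ∃ N' : Submodule (EvConst k) M,
        Submodule.torsionBySet (EvConst k) M (evZeroIdeal k) ⊓ N' = ⊥ ∧
        Submodule.torsionBySet (EvConst k) M (evZeroIdeal k) ⊔ N' = ⊤) ∧
    (¬ ∃ e : EvConst k, IsIdempotentElem e ∧ evZeroIdeal k = Ideal.span {e}) := by
  refine ⟨?_, ?_, ?_, ?_⟩
  · -- (a)
    refine le_antisymm Ideal.mul_le_left (fun x hx => ?_)
    obtain ⟨N, hN⟩ := hx
    rw [← eIdem_mul k hN]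
    exact Ideal.mul_mem_mul (eIdem_mem k N) ⟨N, hN⟩
  · -- (b)
    intro a ha
    apply Subtype.ext
    funext n
    have h := ha (delta k n) (delta_mem k n)
    have h2 : ((a * delta k n : EvConst k) : ℕ → k) n = 0 := by rw [h]; rfl
    have h3 : (a : ℕ → k) n * (if n = n then (1:k) else 0) = 0 := h2
    simpa using h3
  · -- (c)
    intro M _ _
    set t := Submodule.torsionBySet (EvConst k) M ((evZeroIdeal k : Set (EvConst k))) with ht
    have mem_t : ∀ m : M, m ∈ t ↔ ∀ x ∈ evZeroIdeal k, x • m = 0 := by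
      intro m
      rw [ht, Submodule.mem_torsionBySet_iff]
      exact ⟨fun h x hx => h ⟨x, hx⟩, fun h x => h x.1 x.2⟩
    -- every element of IM is fixed by some eIdem
    have key : ∀ m ∈ (evZeroIdeal k • ⊤ : Submodule (EvConst k) M), ∃ N : ℕ, eIdem k N • m = m := by
      intro m hm
      refine Submodule.smul_induction_on hm ?_ ?_
      · rintro x ⟨N, hN⟩ n -
        exact ⟨N, by rw [← mul_smul, eIdem_mul k hN]⟩
      · rintro m₁ m₂ ⟨N₁, h₁⟩ ⟨N₂, h₂⟩
        refine ⟨max N₁ N₂, ?_⟩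
        have e₁ : eIdem k (max N₁ N₂) * eIdem k N₁ = eIdem k N₁ := by
          apply eIdem_mul
          intro n hn
          exact if_neg (by omega)
        have e₂ : eIdem k (max N₁ N₂) * eIdem k N₂ = eIdem k N₂ := by
          apply eIdem_mul
          intro n hn
          exact if_neg (by omega)
        calc eIdem k (max N₁ N₂) • (m₁ + m₂)
            = eIdem k (max N₁ N₂) • (eIdem k N₁ • m₁) + eIdem k (max N₁ N₂) • (eIdem k N₂ • m₂) := by
              rw [h₁, h₂, smul_add]
          _ = m₁ + m₂ := by rw [← mul_smul, ← mul_smul, e₁, e₂, h₁, h₂]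
    -- IM ⊓ t = ⊥
    have hIMt : t ⊓ (evZeroIdeal k • ⊤ : Submodule (EvConst k) M) = ⊥ := by
      rw [eq_bot_iff]
      rintro m ⟨hmt, hmIM⟩
      obtain ⟨N, hN⟩ := key m hmIM
      have := (mem_t m).mp hmt (eIdem k N) (eIdem_mem k N)
      rw [this] at hN
      exact (Submodule.mem_bot _).mpr hN.symm
    -- Zorn's lemma
    set S : Set (Submodule (EvConst k) M) := {N | (evZeroIdeal k • ⊤ : Submodule (EvConst k) M) ≤ N ∧ t ⊓ N = ⊥} with hS
    obtain ⟨N', hIMN', hN'max⟩ := zorn_le_nonempty₀ S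
      (fun c hcS hc y hy => by
        refine ⟨sSup c, ⟨?_, ?_⟩, fun z hz => le_sSup hz⟩
        · exact le_trans (hcS hy).1 (le_sSup hy)
        · rw [eq_bot_iff]
          rintro m ⟨hmt, hms⟩
          obtain ⟨p, hpc, hmp⟩ := (Submodule.mem_sSup_of_directed ⟨y, hy⟩ hc.directedOn).mp hms
          have := (hcS hpc).2
          rw [eq_bot_iff] at this
          exact this ⟨hmt, hmp⟩)
      (evZeroIdeal k • ⊤ : Submodule (EvConst k) M) ⟨le_refl _, hIMt⟩
    refine ⟨N', hN'max.1.2, ?_⟩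
    -- show t ⊔ N' = ⊤
    by_contra hne
    have hne' : t ⊔ N' ≠ ⊤ := hne
    obtain ⟨m, -, hm⟩ := SetLike.exists_of_lt hne'.lt_top
    have hmm : (m : M) ∉ (t ⊔ N' : Submodule (EvConst k) M) := hm
    set N'' : Submodule (EvConst k) M := N' ⊔ Submodule.span (EvConst k) {m} with hN''
    have hN''S : N'' ∈ S := by
      refine ⟨le_trans hN'max.1.1 le_sup_left, ?_⟩
      rw [eq_bot_iff]
      rintro z ⟨hzt, hzN''⟩
      obtain ⟨n, hn, w, hw, hznw⟩ := Submodule.mem_sup.mp hzN''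
      obtain ⟨x, rfl⟩ := Submodule.mem_span_singleton.mp hw
      -- x is eventually constant; get its eventual value
      obtain ⟨N, c, hNc⟩ := x.2
      by_cases hc : c = 0
      · -- x ∈ I
        have hxI : x ∈ evZeroIdeal k := ⟨N, fun n hn => by rw [hNc n hn, hc]⟩
        obtain ⟨N₀, hN₀⟩ := hxI
        have hz0 : eIdem k N₀ • z = 0 := (mem_t z).mp hzt _ (eIdem_mem k N₀)
        have : eIdem k N₀ • n + x • m = 0 := by
          rw [← eIdem_mul k hN₀, mul_smul]
          rw [← hz0, ← hznw, smul_add]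
        have hxm : x • m ∈ N' := by
          have : x • m = -(eIdem k N₀ • n) := by linear_combination (norm := abel) this
          rw [this]
          exact N'.neg_mem (N'.smul_mem _ hn)
        have hzN' : z ∈ N' := hznw ▸ N'.add_mem hn hxm
        have := hN'max.1.2
        rw [eq_bot_iff] at this
        exact this ⟨hzt, hzN'⟩
      · -- eventual value nonzero : contradiction with m ∉ t ⊔ N'
        exfalso
        apply hmm
        have hx0 : x - constSeq k c ∈ evZeroIdeal k := sub_const_mem k hNc
        have hx0m : (x - constSeq k c) • m ∈ N' :=
          hN'max.1.1 (Submodule.smul_mem_smul hx0 trivial)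
        have hcm : constSeq k c • m ∈ (t ⊔ N' : Submodule (EvConst k) M) := by
          have : constSeq k c • m = z - n - (x - constSeq k c) • m := by
            rw [← hznw, sub_smul]
            abel
          rw [this]
          refine Submodule.sub_mem _ (Submodule.sub_mem _ ?_ ?_) ?_
          · exact Submodule.mem_sup_left hzt
          · exact Submodule.mem_sup_right hn
          · exact Submodule.mem_sup_right hx0m
        have : m = constSeq k c⁻¹ • constSeq k c • m := by
          rw [← mul_smul, const_mul_const k c hc, one_smul]
        rw [this]
        exact Submodule.smul_mem _ _ hcm
    have hle : N'' ≤ N' := hN'max.2 hN''S le_sup_left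
    exact hmm (Submodule.mem_sup_right
      (hle (Submodule.mem_sup_right (Submodule.mem_span_singleton_self m))))
  · -- (d)
    rintro ⟨e, -, hspan⟩
    have he : e ∈ evZeroIdeal k := hspan ▸ Ideal.subset_span rfl
    obtain ⟨N, hN⟩ := he
    have hd : delta k N ∈ Ideal.span {e} := hspan ▸ delta_mem k N
    obtain ⟨a, ha⟩ := Ideal.mem_span_singleton'.mp hd
    have : ((a * e : EvConst k) : ℕ → k) N = ((delta k N : EvConst k) : ℕ → k) N := by rw [ha]
    have h1 : (a : ℕ → k) N * (e : ℕ → k) N = (if N = N then (1:k) else 0) := this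
    rw [hN N (le_refl N), mul_zero, if_pos rfl] at h1
    exact zero_ne_one h1

end Stmt18Aux

/-- for a field `k`, let `A` be the ring of eventually constant sequences
in `k^ℕ` and `I` the set of eventually zero sequences.  Then (a) `I` is an idempotent
ideal of `A`; (b) `I` has zero annihilator in `A`; (c) `ann_M(I)` is a direct summand of
`M` for every `A`-module `M`; and (d) there is no idempotent `e ∈ A` with `I = eA`
(so the associated TTF-triple is right split but not centrally split). -/
theorem stmt_18 (k : Type) [Field k] :
    -- (a) `I` is idempotent
    (evZeroIdeal k * evZeroIdeal k = evZeroIdeal k) ∧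
    -- (b) the annihilator of `I` in `A` is zero
    (∀ a : EvConst k, (∀ x ∈ evZeroIdeal k, a * x = 0) → a = 0) ∧
    -- (c) `ann_M(I)` is a direct summand of every `A`-module `M`
    (∀ (M : Type) [AddCommGroup M] [Module (EvConst k) M],
      ∃ N' : Submodule (EvConst k) M,
        Submodule.torsionBySet (EvConst k) M (evZeroIdeal k) ⊓ N' = ⊥ ∧
        Submodule.torsionBySet (EvConst k) M (evZeroIdeal k) ⊔ N' = ⊤) ∧
    -- (d) `I` is not generated by an idempotent
    (¬ ∃ e : EvConst k, IsIdempotentElem e ∧ evZeroIdeal k = Ideal.span {e}) := by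
  exact Stmt18Aux.main k
end
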